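/- arXiv:0903.5282 — 2 statements merged into one kernel-verified Lean document; each statement's English description precedes it below -/
import Mathlib

section
/- Fix γ > 0 and positive rewards R_{A1}, R_{A2}, R_{B1}, R_{B2}. Define G: ℝ^4 → ℝ^4 by G(q)_{A1} = R_{A1} e^{q_{B2}/γ}/(e^{q_{B1}/γ}+e^{q_{B2}/γ}), G(q)_{A2} = R_{A2} e^{q_{B1}/γ}/(e^{q_{B1}/γ}+e^{q_{B2}/γ}), G(q)_{B1} = R_{B1} e^{q_{A2}/γ}/(e^{q_{A1}/γ}+e^{q_{A2}/γ}), G(q)_{B2} = R_{B2} e^{q_{A1}/γ}/(e^{q_{A1}/γ}+e^{q_{A2}/γ}). If max_{i,j} R_{ij} < 2γ, then G is a contraction on ℝ^4 (with the Euclidean norm) and hence has a unique fixed point, i.e., the stationary equations Q_{ij} = R_{ij} e^{Q_{i⁻j⁻}/γ}/(e^{Q_{i⁻j}/γ}+e^{Q_{i⁻j⁻}/γ}) have a unique solution. -/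
/-!
Each coordinate of the stationary map is a reward times a two-action softmax weight
`exp (b/γ) / (exp (a/γ) + exp (b/γ)) = sigmoid ((b - a)/γ)`, and the sigmoid is `1/4`-Lipschitz
because its derivative `σ (1 - σ)` is at most `1/4`. So a coordinate with reward `R` moves by at
most `R/(4γ) |Δb - Δa|`, whose square is at most `(R/(4γ))² · 2 (Δa² + Δb²)`. Every
coordinate of `q` feeds exactly two coordinates of the map, so summing gives the Lipschitz
constant `max R / (2γ)`, which is `< 1`; Banach's fixed point theorem finishes.
-/

/-- The stationary map of the Q-learning dynamics. Coordinates: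
`0 = A1`, `1 = A2`, `2 = B1`, `3 = B2`. -/
noncomputable def stationaryMap (γ RA1 RA2 RB1 RB2 : ℝ)
    (q : EuclideanSpace ℝ (Fin 4)) : EuclideanSpace ℝ (Fin 4) :=
  WithLp.toLp 2 ![RA1 * Real.exp (q 3 / γ) / (Real.exp (q 2 / γ) + Real.exp (q 3 / γ)),
    RA2 * Real.exp (q 2 / γ) / (Real.exp (q 2 / γ) + Real.exp (q 3 / γ)),
    RB1 * Real.exp (q 1 / γ) / (Real.exp (q 0 / γ) + Real.exp (q 1 / γ)),
    RB2 * Real.exp (q 0 / γ) / (Real.exp (q 0 / γ) + Real.exp (q 1 / γ))]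

open Real

namespace Real

lemma sigmoid_mul_one_sub_sigmoid_le (x : ℝ) : sigmoid x * (1 - sigmoid x) ≤ 4⁻¹ := by
  nlinarith [sq_nonneg (sigmoid x - 2⁻¹)]

lemma lipschitzWith_sigmoid : LipschitzWith 4⁻¹ sigmoid := by
  refine lipschitzWith_of_nnnorm_deriv_le (fun _ ↦ differentiableAt_sigmoid) fun x ↦ ?_
  rw [deriv_sigmoid, ← NNReal.coe_le_coe, coe_nnnorm,
    norm_of_nonneg (mul_nonneg (sigmoid_nonneg x) (sub_nonneg.2 (sigmoid_le_one x)))]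
  exact_mod_cast sigmoid_mul_one_sub_sigmoid_le x

lemma exp_div_exp_add_exp (a b : ℝ) : exp b / (exp a + exp b) = sigmoid (b - a) := by
  rw [sigmoid_def, neg_sub, exp_sub]
  field_simp
  ring

end Real

lemma sq_sub_mul_softmax_le {γ R M : ℝ} (hγ : 0 < γ) (hRM : |R| ≤ M) (a b a' b' : ℝ) :
    (R * exp (b / γ) / (exp (a / γ) + exp (b / γ)) -
        R * exp (b' / γ) / (exp (a' / γ) + exp (b' / γ))) ^ 2 ≤
      (M / (4 * γ)) ^ 2 * (2 * ((a - a') ^ 2 + (b - b') ^ 2)) := by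
  set x := b / γ - a / γ
  set y := b' / γ - a' / γ
  have hσ : (sigmoid x - sigmoid y) ^ 2 ≤ ((x - y) / 4) ^ 2 := by
    refine sq_le_sq.2 ?_
    have h := lipschitzWith_sigmoid.dist_le_mul x y
    rw [dist_eq, dist_eq] at h
    rw [abs_div, abs_of_pos (by norm_num : (0 : ℝ) < 4)]
    push_cast at h
    linarith
  have hR : R ^ 2 ≤ M ^ 2 := sq_le_sq' (neg_le_of_abs_le hRM) (le_of_abs_le hRM)
  rw [mul_div_assoc, mul_div_assoc, exp_div_exp_add_exp, exp_div_exp_add_exp, ← mul_sub, mul_pow]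
  calc R ^ 2 * (sigmoid x - sigmoid y) ^ 2
      ≤ M ^ 2 * ((x - y) / 4) ^ 2 := by gcongr
    _ = (M / (4 * γ)) ^ 2 * ((b - b') - (a - a')) ^ 2 := by
        simp only [x, y]
        field_simp
        ring
    _ ≤ (M / (4 * γ)) ^ 2 * (2 * ((a - a') ^ 2 + (b - b') ^ 2)) := by
        gcongr
        nlinarith [sq_nonneg ((b - b') + (a - a'))]

lemma lipschitzWith_stationaryMap {γ RA1 RA2 RB1 RB2 M : ℝ} (hγ : 0 < γ)
    (hA1 : |RA1| ≤ M) (hA2 : |RA2| ≤ M) (hB1 : |RB1| ≤ M) (hB2 : |RB2| ≤ M) :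
    LipschitzWith (M / (2 * γ)).toNNReal (stationaryMap γ RA1 RA2 RB1 RB2) := by
  have hK : 0 ≤ M / (2 * γ) := div_nonneg ((abs_nonneg _).trans hA1) (by positivity)
  refine LipschitzWith.of_dist_le_mul fun q q' ↦ ?_
  rw [coe_toNNReal _ hK]
  refine (pow_le_pow_iff_left₀ dist_nonneg (by positivity) two_ne_zero).1 ?_
  have c0 := sq_sub_mul_softmax_le hγ hA1 (q 2) (q 3) (q' 2) (q' 3)
  have c1 := sq_sub_mul_softmax_le hγ hA2 (q 3) (q 2) (q' 3) (q' 2)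
  have c2 := sq_sub_mul_softmax_le hγ hB1 (q 0) (q 1) (q' 0) (q' 1)
  have c3 := sq_sub_mul_softmax_le hγ hB2 (q 1) (q 0) (q' 1) (q' 0)
  rw [add_comm (exp (q 3 / γ)), add_comm (exp (q' 3 / γ))] at c1
  rw [add_comm (exp (q 1 / γ)), add_comm (exp (q' 1 / γ))] at c3
  rw [mul_pow, EuclideanSpace.dist_sq_eq, EuclideanSpace.dist_sq_eq]
  simp only [Fin.sum_univ_four, stationaryMap, dist_eq, sq_abs, Matrix.cons_val_zero,
    Matrix.cons_val_one, Matrix.cons_val_two, Matrix.cons_val_three, Matrix.head_cons,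
    Matrix.tail_cons]
  have hM : (M / (2 * γ)) ^ 2 = 4 * (M / (4 * γ)) ^ 2 := by
    field_simp
    ring
  rw [hM]
  linarith

theorem stationary_map_contraction (γ RA1 RA2 RB1 RB2 : ℝ) (hγ : 0 < γ)
    (hA1 : 0 < RA1) (hA2 : 0 < RA2) (hB1 : 0 < RB1) (hB2 : 0 < RB2)
    (hbound : max (max RA1 RA2) (max RB1 RB2) < 2 * γ) :
    (∃ K : NNReal, K < 1 ∧ LipschitzWith K (stationaryMap γ RA1 RA2 RB1 RB2)) ∧
    (∃! q : EuclideanSpace ℝ (Fin 4), stationaryMap γ RA1 RA2 RB1 RB2 q = q) := by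
  set M := max (max RA1 RA2) (max RB1 RB2)
  have hK : (M / (2 * γ)).toNNReal < 1 :=
    toNNReal_lt_one.2 ((div_lt_one (by positivity)).2 hbound)
  have hf : ContractingWith (M / (2 * γ)).toNNReal (stationaryMap γ RA1 RA2 RB1 RB2) :=
    ⟨hK, lipschitzWith_stationaryMap hγ
      ((abs_of_pos hA1).trans_le (le_max_of_le_left (le_max_left _ _)))
      ((abs_of_pos hA2).trans_le (le_max_of_le_left (le_max_right _ _)))
      ((abs_of_pos hB1).trans_le (le_max_of_le_right (le_max_left _ _)))
      ((abs_of_pos hB2).trans_le (le_max_of_le_right (le_max_right _ _)))⟩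
  exact ⟨⟨_, hf⟩, hf.fixedPoint _, hf.fixedPoint_isFixedPt, fun _ hq ↦ hf.fixedPoint_unique hq⟩
end

section
/- Fix γ > 0 and rewards 0 < R_{ij} < 2γ for i ∈ {A,B}, j ∈ {1,2}. Let q(t) be a solution of the ODE q̇ = G(q) − q, where G is the stationary map defined from the Boltzmann exploration probabilities. Then V(t) = ‖G(q(t)) − q(t)‖² satisfies dV/dt ≤ 0 along trajectories, and dV/dt < 0 whenever G(q(t)) ≠ q(t). -/
theorem hasDerivAt_piLp {ι : Type*} [Fintype ι] {E : ι → Type*} [∀ i, NormedAddCommGroup (E i)]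
    [∀ i, NormedSpace ℝ (E i)] {p : ENNReal} [Fact (1 ≤ p)] {f : ℝ → PiLp p E} {f' : PiLp p E}
    {t : ℝ} : HasDerivAt f f' t ↔ ∀ i, HasDerivAt (fun s => f s i) (f' i) t := by
  simp only [← hasDerivWithinAt_univ, hasDerivWithinAt_iff_hasFDerivWithinAt,
    hasFDerivWithinAt_piLp]
  rfl

/-- `logisticWeight x y = σ(x - y) σ(y - x)` for the logistic function `σ`: the partial derivative
of the Boltzmann probability `exp x / (exp x + exp y)` in `x`. -/
noncomputable def logisticWeight (x y : ℝ) : ℝ :=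
  Real.exp x * Real.exp y / (Real.exp x + Real.exp y) ^ 2

lemma logisticWeight_comm (x y : ℝ) : logisticWeight x y = logisticWeight y x := by
  rw [logisticWeight, logisticWeight, mul_comm, add_comm]

lemma logisticWeight_nonneg (x y : ℝ) : 0 ≤ logisticWeight x y := by
  unfold logisticWeight; positivity

lemma mul_div_add_sq_le_quarter {K : Type*} [Field K] [LinearOrder K] [IsStrictOrderedRing K]
    (a b : K) : a * b / (a + b) ^ 2 ≤ 1 / 4 :=
  div_le_of_le_mul₀ (sq_nonneg _) (by norm_num) (by linarith [four_mul_le_sq_add a b])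

lemma logisticWeight_le_quarter (x y : ℝ) : logisticWeight x y ≤ 1 / 4 :=
  mul_div_add_sq_le_quarter _ _

theorem HasDerivAt.mul_exp_div_exp_add_exp (c : ℝ) {x y : ℝ → ℝ} {x' y' t : ℝ}
    (hx : HasDerivAt x x' t) (hy : HasDerivAt y y' t) :
    HasDerivAt (fun s => c * Real.exp (x s) / (Real.exp (x s) + Real.exp (y s)))
      (c * logisticWeight (x t) (y t) * (x' - y')) t := by
  refine ((hx.exp.const_mul c).div (hx.exp.add hy.exp)
    (by positivity : Real.exp (x t) + Real.exp (y t) ≠ 0)).congr_deriv ?_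
  simp only [logisticWeight, Pi.add_apply]
  field_simp
  ring

theorem HasDerivAt.mul_exp_div_exp_add_exp' (c : ℝ) {x y : ℝ → ℝ} {x' y' t : ℝ}
    (hx : HasDerivAt x x' t) (hy : HasDerivAt y y' t) :
    HasDerivAt (fun s => c * Real.exp (y s) / (Real.exp (x s) + Real.exp (y s)))
      (c * logisticWeight (x t) (y t) * (y' - x')) t := by
  simpa only [add_comm (Real.exp (y _)), logisticWeight_comm (y t)] using
    hy.mul_exp_div_exp_add_exp c hx

noncomputable def stationaryMapDeriv (γ RA1 RA2 RB1 RB2 : ℝ)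
    (q v : EuclideanSpace ℝ (Fin 4)) : EuclideanSpace ℝ (Fin 4) :=
  WithLp.toLp 2 ![RA1 / γ * logisticWeight (q 2 / γ) (q 3 / γ) * (v 3 - v 2),
    RA2 / γ * logisticWeight (q 2 / γ) (q 3 / γ) * (v 2 - v 3),
    RB1 / γ * logisticWeight (q 0 / γ) (q 1 / γ) * (v 1 - v 0),
    RB2 / γ * logisticWeight (q 0 / γ) (q 1 / γ) * (v 0 - v 1)]

theorem HasDerivAt.stationaryMap {γ RA1 RA2 RB1 RB2 t : ℝ}
    {q : ℝ → EuclideanSpace ℝ (Fin 4)} {v : EuclideanSpace ℝ (Fin 4)} (hq : HasDerivAt q v t) :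
    HasDerivAt (fun s => stationaryMap γ RA1 RA2 RB1 RB2 (q s))
      (stationaryMapDeriv γ RA1 RA2 RB1 RB2 (q t) v) t := by
  have hc (i : Fin 4) : HasDerivAt (fun s => q s i / γ) (v i / γ) t :=
    ((PiLp.hasFDerivAt_apply 2 (q t) i).comp_hasDerivAt t hq).div_const γ
  refine hasDerivAt_piLp (p := 2) |>.2 fun i => ?_
  fin_cases i <;> simp only [stationaryMapDeriv, Fin.zero_eta, Fin.mk_one, Fin.reduceFinMk,
    Matrix.cons_val_zero, Matrix.cons_val_one, Matrix.cons_val]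
  · exact ((hc 2).mul_exp_div_exp_add_exp' RA1 (hc 3)).congr_deriv (by ring)
  · exact ((hc 2).mul_exp_div_exp_add_exp RA2 (hc 3)).congr_deriv (by ring)
  · exact ((hc 0).mul_exp_div_exp_add_exp' RB1 (hc 1)).congr_deriv (by ring)
  · exact ((hc 0).mul_exp_div_exp_add_exp RB2 (hc 1)).congr_deriv (by ring)

lemma sq_mul_sub_add_sq_mul_sub_le {α β k : ℝ} (hα : 2 * |α| ≤ k) (hβ : 2 * |β| ≤ k) (x y : ℝ) :
    (α * (x - y)) ^ 2 + (β * (y - x)) ^ 2 ≤ k ^ 2 * (x ^ 2 + y ^ 2) := by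
  have hα2 : 4 * α ^ 2 ≤ k ^ 2 := by nlinarith [sq_abs α, abs_nonneg α]
  have hβ2 : 4 * β ^ 2 ≤ k ^ 2 := by nlinarith [sq_abs β, abs_nonneg β]
  nlinarith [sq_nonneg (x + y), sq_nonneg (x - y)]

theorem norm_stationaryMapDeriv_le {γ RA1 RA2 RB1 RB2 M : ℝ} (hγ : 0 < γ)
    (hA1 : |RA1| ≤ M) (hA2 : |RA2| ≤ M) (hB1 : |RB1| ≤ M) (hB2 : |RB2| ≤ M)
    (q v : EuclideanSpace ℝ (Fin 4)) :
    ‖stationaryMapDeriv γ RA1 RA2 RB1 RB2 q v‖ ≤ M / (2 * γ) * ‖v‖ := by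
  have hM : 0 ≤ M := (abs_nonneg _).trans hA1
  have hcoeff {R : ℝ} (hR : |R| ≤ M) (x y : ℝ) :
      2 * |R / γ * logisticWeight x y| ≤ M / (2 * γ) := by
    rw [abs_mul, abs_div, abs_of_pos hγ, abs_of_nonneg (logisticWeight_nonneg x y)]
    calc 2 * (|R| / γ * logisticWeight x y) ≤ 2 * (M / γ * (1 / 4)) := by
          gcongr
          exacts [logisticWeight_nonneg x y, logisticWeight_le_quarter x y]
      _ = M / (2 * γ) := by field_simp; ring
  refine le_of_pow_le_pow_left₀ two_ne_zero (by positivity) ?_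
  rw [mul_pow, EuclideanSpace.norm_sq_eq, EuclideanSpace.norm_sq_eq]
  simp only [stationaryMapDeriv, Real.norm_eq_abs, sq_abs, Fin.sum_univ_four,
    Matrix.cons_val_zero, Matrix.cons_val_one, Matrix.cons_val]
  linarith [sq_mul_sub_add_sq_mul_sub_le (hcoeff hA1 (q 2 / γ) (q 3 / γ))
    (hcoeff hA2 (q 2 / γ) (q 3 / γ)) (v 3) (v 2),
    sq_mul_sub_add_sq_mul_sub_le (hcoeff hB1 (q 0 / γ) (q 1 / γ))
    (hcoeff hB2 (q 0 / γ) (q 1 / γ)) (v 1) (v 0)]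

theorem HasDerivAt.deriv_norm_sq_le {E : Type*} [NormedAddCommGroup E] [InnerProductSpace ℝ E]
    {f : ℝ → E} {w : E} {t k : ℝ} (hf : HasDerivAt f (w - f t) t) (hw : ‖w‖ ≤ k * ‖f t‖) :
    _root_.deriv (fun s => ‖f s‖ ^ 2) t ≤ 2 * (k - 1) * ‖f t‖ ^ 2 := by
  rw [hf.norm_sq.deriv, inner_sub_right, real_inner_self_eq_norm_sq]
  have := (real_inner_le_norm (f t) w).trans (mul_le_mul_of_nonneg_left hw (norm_nonneg _))
  nlinarith

theorem lyapunov_decreasing_along_trajectories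
    (γ RA1 RA2 RB1 RB2 : ℝ) (hγ : 0 < γ)
    (hA1 : 0 < RA1) (hA1' : RA1 < 2 * γ)
    (hA2 : 0 < RA2) (hA2' : RA2 < 2 * γ)
    (hB1 : 0 < RB1) (hB1' : RB1 < 2 * γ)
    (hB2 : 0 < RB2) (hB2' : RB2 < 2 * γ)
    (q : ℝ → EuclideanSpace ℝ (Fin 4))
    (hq : ∀ t, HasDerivAt q (stationaryMap γ RA1 RA2 RB1 RB2 (q t) - q t) t) :
    let G := stationaryMap γ RA1 RA2 RB1 RB2
    let V : ℝ → ℝ := fun t => ‖G (q t) - q t‖ ^ 2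
    ∀ t : ℝ, deriv V t ≤ 0 ∧ (G (q t) ≠ q t → deriv V t < 0) := by
  intro G V t
  set M := max (max RA1 RA2) (max RB1 RB2)
  have hk : M / (2 * γ) - 1 < 0 := by
    rw [sub_neg, div_lt_one (by positivity)]
    exact max_lt (max_lt hA1' hA2') (max_lt hB1' hB2')
  have hV : deriv V t ≤ 2 * (M / (2 * γ) - 1) * ‖G (q t) - q t‖ ^ 2 :=
    ((hq t).stationaryMap.sub (hq t)).deriv_norm_sq_le <| norm_stationaryMapDeriv_le hγ
      ((abs_of_pos hA1).trans_le (by simp [M])) ((abs_of_pos hA2).trans_le (by simp [M]))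
      ((abs_of_pos hB1).trans_le (by simp [M])) ((abs_of_pos hB2).trans_le (by simp [M])) _ _
  refine ⟨hV.trans ?_, fun hne => hV.trans_lt ?_⟩
  · exact mul_nonpos_of_nonpos_of_nonneg (by linarith) (sq_nonneg _)
  · exact mul_neg_of_neg_of_pos (by linarith) (pow_pos (norm_pos_iff.2 (sub_ne_zero.2 hne)) 2)
end
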